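/- arXiv:2304.10359 — 2 statements merged into one kernel-verified Lean document; each statement's English description precedes it below -/
import Mathlib

section
/- Let s, T, V be real polynomials in x = (x₁, …, x_n), let A be a real polynomial in (x, a) with a = (a₁, …, a_m), and let f₁, …, f_n be real polynomials in (x, a). Suppose there exist sum-of-squares polynomials λ₁, λ₂ in x, a real polynomial λ₃ in (x, a), a sum-of-squares polynomial λ₄ in (x, a), and a real number ε > 0 such that: (i) s − λ₁·(1 − V) is SOS; (ii) (1 − V) − λ₂·T is SOS; (iii) −Σ_{i=1}^n (∂V/∂x_i)·f_i − ε − λ₃·(V − 1) − λ₄·A is SOS. Then for every differentiable trajectory x : [0,∞) → ℝⁿ and every signal a : [0,∞) → ℝᵐ satisfying ẋ(t) = f(x(t), a(t)) and A(x(t), a(t)) ≥ 0 for all t ≥ 0, if T(x(0)) ≥ 0 then s(x(t)) ≥ 0 for all t ≥ 0. In particular the reachable set of ẋ = f(x,a) from the initial set 𝒯 = {T ≥ 0} under the attack constraint is contained in the safe set 𝒮 = {s ≥ 0}. -/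
/-!
The sublevel set `{V ≤ 1}` is a barrier. Each SOS certificate is used through the
S-procedure: if `p - λ q` and `λ` are SOS, then `p ≥ 0` wherever `q ≥ 0`. Thus (ii) puts
`x(0)` in `{V ≤ 1}`, (iii) makes `V` strictly decrease along the flow whenever `V(x(t)) = 1`
and the attack is admissible, so the trajectory can never leave `{V ≤ 1}`, and (i) shows
`s ≥ 0` on that set.
-/

open MvPolynomial

def IsSOS {σ : Type*} (p : MvPolynomial σ ℝ) : Prop :=
  ∃ (k : ℕ) (q : Fin k → MvPolynomial σ ℝ), p = ∑ j, (q j) ^ 2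

theorem IsSOS.eval_nonneg {σ : Type*} {p : MvPolynomial σ ℝ} (hp : IsSOS p) (y : σ → ℝ) :
    0 ≤ eval y p := by
  obtain ⟨k, q, rfl⟩ := hp
  simp only [map_sum, map_pow]
  exact Finset.sum_nonneg fun j _ => sq_nonneg _

theorem IsSOS.eval_nonneg_of_sub_mul {σ : Type*} {p q lam : MvPolynomial σ ℝ}
    (h : IsSOS (p - lam * q)) (hlam : IsSOS lam) {y : σ → ℝ} (hq : 0 ≤ eval y q) :
    0 ≤ eval y p := by
  have := h.eval_nonneg y
  rw [eval_sub, eval_mul] at this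
  nlinarith [mul_nonneg (hlam.eval_nonneg y) hq]

theorem MvPolynomial.hasDerivAt_eval_comp {σ : Type*} [Fintype σ] {x : ℝ → σ → ℝ}
    {x' : σ → ℝ} {t : ℝ} (hx : HasDerivAt x x' t) (p : MvPolynomial σ ℝ) :
    HasDerivAt (fun u => eval (x u) p) (∑ i, eval (x t) (pderiv i p) * x' i) t := by
  classical
  induction p using MvPolynomial.induction_on with
  | C r => simpa using hasDerivAt_const t r
  | add p q hp hq =>
    simp only [map_add, add_mul, Finset.sum_add_distrib]
    exact hp.add hq
  | mul_X p j hp =>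
    have hderiv : ∑ i, eval (x t) (pderiv i (p * X j)) * x' i =
        (∑ i, eval (x t) (pderiv i p) * x' i) * x t j + eval (x t) p * x' j := by
      simp [pderiv_X, Pi.single_apply, apply_ite (eval (x t)), add_mul, Finset.sum_add_distrib,
        Finset.sum_mul, mul_right_comm, mul_comm (x t j), add_comm]
    simp only [hderiv, map_mul, eval_X]
    exact hp.mul (hasDerivAt_pi.mp hx j)

theorem le_of_hasDerivAt_neg_of_eq {g g' : ℝ → ℝ} {c : ℝ}
    (hg : ∀ t, 0 ≤ t → HasDerivAt g (g' t) t) (h0 : g 0 ≤ c)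
    (hboundary : ∀ t, 0 ≤ t → g t = c → g' t < 0) {t : ℝ} (ht : 0 ≤ t) : g t ≤ c :=
  image_le_of_deriv_right_lt_deriv_boundary
    (fun u hu => (hg u hu.1).continuousAt.continuousWithinAt)
    (fun u hu => (hg u hu.1).hasDerivWithinAt) h0 (fun _ => hasDerivAt_const _ c)
    (fun u hu => hboundary u hu.1) ⟨ht, le_rfl⟩

/-- Theorem 1 of the paper (with the slack margin `ε > 0` of condition (16)):
the three SOS conditions imply that every trajectory of `ẋ = f(x,a)` starting in
the initial set `{T ≥ 0}`, under the attack constraint `A(x,a) ≥ 0`, remains in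
the safe set `{s ≥ 0}` for all `t ≥ 0`. -/
theorem safety_primary {n m : ℕ}
    (s T V : MvPolynomial (Fin n) ℝ)
    (A : MvPolynomial (Fin n ⊕ Fin m) ℝ)
    (f : Fin n → MvPolynomial (Fin n ⊕ Fin m) ℝ)
    (lam1 lam2 : MvPolynomial (Fin n) ℝ)
    (lam3 lam4 : MvPolynomial (Fin n ⊕ Fin m) ℝ)
    (ε : ℝ) (hε : 0 < ε)
    (hlam1 : IsSOS lam1) (hlam2 : IsSOS lam2) (hlam4 : IsSOS lam4)
    (c1 : IsSOS (s - lam1 * (1 - V)))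
    (c2 : IsSOS ((1 - V) - lam2 * T))
    (c3 : IsSOS (-(∑ i, (rename Sum.inl (pderiv i V)) * f i) - C ε
        - lam3 * ((rename Sum.inl V) - 1) - lam4 * A)) :
    ∀ (x : ℝ → Fin n → ℝ) (a : ℝ → Fin m → ℝ),
      (∀ t : ℝ, 0 ≤ t →
        HasDerivAt x (fun i => eval (Sum.elim (x t) (a t)) (f i)) t) →
      (∀ t : ℝ, 0 ≤ t → 0 ≤ eval (Sum.elim (x t) (a t)) A) →
      0 ≤ eval (x 0) T → ∀ t : ℝ, 0 ≤ t → 0 ≤ eval (x t) s := by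
  intro x a hx hA hT0 t ht
  have hV0 : eval (x 0) V ≤ 1 := by
    simpa using c2.eval_nonneg_of_sub_mul hlam2 hT0
  have hboundary : ∀ u, 0 ≤ u → eval (x u) V = 1 →
      ∑ i, eval (x u) (pderiv i V) * eval (Sum.elim (x u) (a u)) (f i) < 0 := by
    intro u hu hVu
    have h := c3.eval_nonneg_of_sub_mul hlam4 (hA u hu)
    simp only [eval_sub, eval_neg, eval_mul, eval_C, map_one, map_sum, eval_rename,
      Sum.elim_comp_inl, hVu, sub_self, mul_zero, sub_zero] at h
    linarith
  have hVt : eval (x t) V ≤ 1 := le_of_hasDerivAt_neg_of_eq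
    (fun u hu => hasDerivAt_eval_comp (hx u hu) V) hV0 hboundary ht
  exact c1.eval_nonneg_of_sub_mul hlam1 (by simpa using hVt)
end

section
/- Let s, T, V be real polynomials in x = (x₁, …, x_n), let A be a real polynomial in (x, a) with a = (a₁, …, a_m), let f₁, …, f_n be real polynomials in (x, a), let g be an n×q matrix of real polynomials in x, and let h = (h₁, …, h_q) be a vector of real polynomials in x (the polynomial static feedback controller). Define the closed-loop polynomial vector field f̃ᵢ(x,a) := fᵢ(x,a) + Σ_{j=1}^q gᵢⱼ(x)·hⱼ(x). Suppose there exist sum-of-squares polynomials λ₁, λ₂ in x, a real polynomial λ₃ in (x, a), a sum-of-squares polynomial λ₄ in (x, a), and ε > 0 such that: (i) s − λ₁·(1 − V) is SOS; (ii) (1 − V) − λ₂·T is SOS; (iii) −Σ_{i=1}^n (∂V/∂x_i)·f̃ᵢ − ε − λ₃·(V − 1) − λ₄·A is SOS. Then for every differentiable trajectory x : [0,∞) → ℝⁿ and every signal a : [0,∞) → ℝᵐ satisfying ẋ(t) = f(x(t), a(t)) + g(x(t))·h(x(t)) and A(x(t), a(t)) ≥ 0 for all t ≥ 0, if T(x(0))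 ≥ 0 then s(x(t)) ≥ 0 for all t ≥ 0; i.e., the reachable set of the closed-loop system with the secondary controller from 𝒯 is contained in 𝒮. -/
open MvPolynomial

theorem HasDerivAt.mvPolynomial_eval {σ : Type*} [Fintype σ] [DecidableEq σ]
    {c : ℝ → σ → ℝ} {c' : σ → ℝ} {t : ℝ} (hc : HasDerivAt c c' t) (p : MvPolynomial σ ℝ) :
    HasDerivAt (fun u => eval (c u) p) (∑ i, eval (c t) (pderiv i p) * c' i) t := by
  induction p using MvPolynomial.induction_on with
  | C r => simpa using hasDerivAt_const t r
  | add p r hp hr => simpa [add_mul, Finset.sum_add_distrib, Pi.add_def] using hp.add hr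
  | mul_X p i hp =>
    have leibniz : ∑ j, eval (c t) (pderiv j (p * X i)) * c' j
        = (∑ j, eval (c t) (pderiv j p) * c' j) * c t i + eval (c t) p * c' i := by
      simp only [pderiv_mul, pderiv_X, map_add, map_mul, eval_X, add_mul, Finset.sum_add_distrib,
        Finset.sum_mul, Pi.single_apply]
      simp [mul_right_comm]
    simpa only [map_mul, eval_X, leibniz, Pi.mul_def] using hp.mul (hasDerivAt_pi.mp hc i)

theorem le_of_hasDerivAt_of_deriv_neg_at_level {φ φ' : ℝ → ℝ} {c : ℝ}
    (hφ : ∀ t, 0 ≤ t → HasDerivAt φ (φ' t) t) (h0 : φ 0 ≤ c)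
    (hc : ∀ t, 0 ≤ t → φ t = c → φ' t < 0) {t : ℝ} (ht : 0 ≤ t) : φ t ≤ c :=
  image_le_of_deriv_right_lt_deriv_boundary (B := fun _ => c) (B' := 0)
    (fun u hu => (hφ u hu.1).continuousAt.continuousWithinAt)
    (fun u hu => (hφ u hu.1).hasDerivWithinAt) h0 (fun _ => hasDerivAt_const _ c)
    (fun u hu => hc u hu.1) ⟨ht, le_rfl⟩

namespace IsSOS

variable {σ : Type*} {p l r : MvPolynomial σ ℝ}

theorem eval_nonneg_s9 (hp : IsSOS p) (v : σ → ℝ) : 0 ≤ eval v p := by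
  obtain ⟨k, q, rfl⟩ := hp
  simpa only [map_sum, map_pow] using Finset.sum_nonneg fun j _ => sq_nonneg (eval v (q j))

theorem eval_nonneg_of_sub_mul_s9 (h : IsSOS (p - l * r)) (hl : IsSOS l) {v : σ → ℝ}
    (hr : 0 ≤ eval v r) : 0 ≤ eval v p := by
  have := h.eval_nonneg_s9 v
  rw [map_sub, map_mul] at this
  nlinarith [mul_nonneg (hl.eval_nonneg_s9 v) hr]

theorem le_eval_of_sub_C_sub_mul_sub_mul {A l' : MvPolynomial σ ℝ} {ε : ℝ}
    (h : IsSOS (p - C ε - l' * r - l * A)) (hl : IsSOS l) {v : σ → ℝ}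
    (hr : eval v r = 0) (hA : 0 ≤ eval v A) : ε ≤ eval v p := by
  have := h.eval_nonneg_s9 v
  rw [map_sub, map_sub, map_sub, map_mul, map_mul, eval_C, hr] at this
  nlinarith [mul_nonneg (hl.eval_nonneg_s9 v) hA]

end IsSOS

theorem safety_secondary_general {n m : ℕ}
    (s T V : MvPolynomial (Fin n) ℝ)
    (A : MvPolynomial (Fin n ⊕ Fin m) ℝ)
    (lam1 lam2 : MvPolynomial (Fin n) ℝ)
    (lam3 lam4 : MvPolynomial (Fin n ⊕ Fin m) ℝ)
    (ε : ℝ) (hε : 0 < ε)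
    (hlam1 : IsSOS lam1) (hlam2 : IsSOS lam2) (hlam4 : IsSOS lam4)
    (ftilde : Fin n → MvPolynomial (Fin n ⊕ Fin m) ℝ)
    (c1 : IsSOS (s - lam1 * (1 - V)))
    (c2 : IsSOS ((1 - V) - lam2 * T))
    (c3 : IsSOS (-(∑ i, (rename Sum.inl (pderiv i V)) * ftilde i) - C ε
        - lam3 * ((rename Sum.inl V) - 1) - lam4 * A)) :
    ∀ (x : ℝ → Fin n → ℝ) (a : ℝ → Fin m → ℝ),
      (∀ t : ℝ, 0 ≤ t →
        HasDerivAt x (fun i => eval (Sum.elim (x t) (a t)) (ftilde i)) t) →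
      (∀ t : ℝ, 0 ≤ t → 0 ≤ eval (Sum.elim (x t) (a t)) A) →
      0 ≤ eval (x 0) T → ∀ t : ℝ, 0 ≤ t → 0 ≤ eval (x t) s := by
  intro x a hx hA hT0 t ht
  have hV0 : eval (x 0) V ≤ 1 := by
    simpa [sub_nonneg] using c2.eval_nonneg_of_sub_mul_s9 hlam2 hT0
  have hV : ∀ u, 0 ≤ u → HasDerivAt (fun u => eval (x u) V)
      (eval (Sum.elim (x u) (a u)) (∑ i, rename Sum.inl (pderiv i V) * ftilde i)) u := by
    intro u hu
    simpa [eval_rename, Sum.elim_comp_inl] using (hx u hu).mvPolynomial_eval V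
  have hdecay : ∀ u, 0 ≤ u → eval (x u) V = 1 →
      eval (Sum.elim (x u) (a u)) (∑ i, rename Sum.inl (pderiv i V) * ftilde i) < 0 := by
    intro u hu hVu
    have := c3.le_eval_of_sub_C_sub_mul_sub_mul hlam4
      (by simp [eval_rename, Sum.elim_comp_inl, hVu]) (hA u hu)
    rw [map_neg] at this
    linarith
  have hVt : eval (x t) V ≤ 1 := le_of_hasDerivAt_of_deriv_neg_at_level hV hV0 hdecay ht
  exact c1.eval_nonneg_of_sub_mul_s9 hlam1 (by simpa [sub_nonneg] using hVt)

/-- Theorem 2 of the paper (with slack margin `ε > 0` of condition (19)):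
for the closed-loop vector field `f̃ᵢ = fᵢ + ∑ⱼ gᵢⱼ·hⱼ` obtained by adding the
polynomial secondary controller `u_s = h(x)`, the three SOS conditions imply
that every trajectory of `ẋ = f(x,a) + g(x)h(x)` starting in `{T ≥ 0}` under
the attack constraint `A(x,a) ≥ 0` remains in the safe set `{s ≥ 0}`. -/
theorem safety_secondary {n m q : ℕ}
    (s T V : MvPolynomial (Fin n) ℝ)
    (A : MvPolynomial (Fin n ⊕ Fin m) ℝ)
    (f : Fin n → MvPolynomial (Fin n ⊕ Fin m) ℝ)
    (g : Fin n → Fin q → MvPolynomial (Fin n) ℝ)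
    (h : Fin q → MvPolynomial (Fin n) ℝ)
    (lam1 lam2 : MvPolynomial (Fin n) ℝ)
    (lam3 lam4 : MvPolynomial (Fin n ⊕ Fin m) ℝ)
    (ε : ℝ) (hε : 0 < ε)
    (hlam1 : IsSOS lam1) (hlam2 : IsSOS lam2) (hlam4 : IsSOS lam4)
    (ftilde : Fin n → MvPolynomial (Fin n ⊕ Fin m) ℝ)
    (hftilde : ∀ i, ftilde i = f i + rename Sum.inl (∑ j, g i j * h j))
    (c1 : IsSOS (s - lam1 * (1 - V)))
    (c2 : IsSOS ((1 - V) - lam2 * T))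
    (c3 : IsSOS (-(∑ i, (rename Sum.inl (pderiv i V)) * ftilde i) - C ε
        - lam3 * ((rename Sum.inl V) - 1) - lam4 * A)) :
    ∀ (x : ℝ → Fin n → ℝ) (a : ℝ → Fin m → ℝ),
      (∀ t : ℝ, 0 ≤ t →
        HasDerivAt x (fun i => eval (Sum.elim (x t) (a t)) (ftilde i)) t) →
      (∀ t : ℝ, 0 ≤ t → 0 ≤ eval (Sum.elim (x t) (a t)) A) →
      0 ≤ eval (x 0) T → ∀ t : ℝ, 0 ≤ t → 0 ≤ eval (x t) s :=
  safety_secondary_general s T V A lam1 lam2 lam3 lam4 ε hε hlam1 hlam2 hlam4 ftilde c1 c2 c3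
end
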